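/- The direction of the Darboux vector D = τ·t + k·b (which spans the rulings of the rectifying developable of ξ) is constant on an interval I — i.e. the unit vector D/‖D‖ is constant on I — if and only if the ratio τ/k is constant on I. -/

import Mathlib

open scoped RealInnerProductSpace

noncomputable section

/-- The determinant of the 3×3 matrix with rows `u`, `v`, `w`. -/
def det3 (u v w : EuclideanSpace ℝ (Fin 3)) : ℝ :=
  u 0 * (v 1 * w 2 - v 2 * w 1) - u 1 * (v 0 * w 2 - v 2 * w 0)
    + u 2 * (v 0 * w 1 - v 1 * w 0)

/-- The cross product of two vectors in `ℝ³`. -/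
def cross3 (u v : EuclideanSpace ℝ (Fin 3)) : EuclideanSpace ℝ (Fin 3) :=
  (WithLp.equiv 2 (Fin 3 → ℝ)).symm
    ![u 1 * v 2 - u 2 * v 1, u 2 * v 0 - u 0 * v 2, u 0 * v 1 - u 1 * v 0]

lemma inner3 (u v : EuclideanSpace ℝ (Fin 3)) :
    ⟪u, v⟫ = u 0 * v 0 + u 1 * v 1 + u 2 * v 2 := by
  simp [PiLp.inner_apply, Fin.sum_univ_three, RCLike.inner_apply, mul_comm]

lemma cross3_apply (u v : EuclideanSpace ℝ (Fin 3)) (i : Fin 3) :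
    cross3 u v i = ![u 1 * v 2 - u 2 * v 1, u 2 * v 0 - u 0 * v 2, u 0 * v 1 - u 1 * v 0] i := rfl

lemma inner_cross_eq_det (u v w : EuclideanSpace ℝ (Fin 3)) :
    ⟪cross3 u v, w⟫ = det3 u v w := by
  simp [inner3, cross3_apply, det3, Fin.sum_univ_three]; ring

lemma lagrange (a b c d : EuclideanSpace ℝ (Fin 3)) :
    ⟪cross3 a b, cross3 c d⟫ = ⟪a,c⟫ * ⟪b,d⟫ - ⟪a,d⟫ * ⟪b,c⟫ := by
  simp [inner3, cross3_apply, Fin.sum_univ_three]; ring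

lemma cross3_smul_right (u v : EuclideanSpace ℝ (Fin 3)) (c : ℝ) :
    cross3 u (c • v) = c • cross3 u v := by
  ext i; fin_cases i <;> simp [cross3_apply] <;> ring

lemma cross3_self (u : EuclideanSpace ℝ (Fin 3)) : cross3 u u = 0 := by
  ext i; fin_cases i <;> simp [cross3_apply] <;> ring

lemma det3_swap23 (u v w : EuclideanSpace ℝ (Fin 3)) : det3 u v w = -det3 u w v := by
  simp [det3]; ring

lemma det3_eq_zero₁₃ (u v : EuclideanSpace ℝ (Fin 3)) : det3 u v u = 0 := by
  simp [det3]; ring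

lemma det3_eq_zero₂₃ (u v : EuclideanSpace ℝ (Fin 3)) : det3 u v v = 0 := by
  simp [det3]; ring

lemma span3 (u a b : EuclideanSpace ℝ (Fin 3)) :
    ⟪cross3 a b, cross3 a b⟫ • u
      = ⟪cross3 a b, u⟫ • cross3 a b - ⟪u, a⟫ • (⟪a, b⟫ • b - ⟪b, b⟫ • a)
        + ⟪u, b⟫ • (⟪a, a⟫ • b - ⟪a, b⟫ • a) := by
  ext i; simp only [inner3]; fin_cases i <;>
    simp [inner3, cross3_apply, Fin.sum_univ_three] <;> ring

lemma hasDerivAt_comp_proj {f : ℝ → EuclideanSpace ℝ (Fin 3)} {f' : EuclideanSpace ℝ (Fin 3)}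
    {x : ℝ} (hf : HasDerivAt f f' x) (i : Fin 3) :
    HasDerivAt (fun t => f t i) (f' i) x := by
  exact (EuclideanSpace.proj i).hasFDerivAt.comp_hasDerivAt x hf

lemma hasDerivAt_cross3 {f g : ℝ → EuclideanSpace ℝ (Fin 3)}
    {f' g' : EuclideanSpace ℝ (Fin 3)} {x : ℝ}
    (hf : HasDerivAt f f' x) (hg : HasDerivAt g g' x) :
    HasDerivAt (fun t => cross3 (f t) (g t)) (cross3 f' (g x) + cross3 (f x) g') x := by
  have h := fun i => hasDerivAt_comp_proj hf i
  have h2 := fun i => hasDerivAt_comp_proj hg i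
  have key : HasDerivAt (fun t => (fun i => cross3 (f t) (g t) i : Fin 3 → ℝ))
      (fun i => (cross3 f' (g x) + cross3 (f x) g') i) x := by
    rw [hasDerivAt_pi]
    intro i
    fin_cases i <;>
      simp only [cross3_apply, PiLp.add_apply]
    · convert (((h 1).mul (h2 2)).sub ((h 2).mul (h2 1))) using 1; rfl; simp; ring
    · convert (((h 2).mul (h2 0)).sub ((h 0).mul (h2 2))) using 1; rfl; simp; ring
    · convert (((h 0).mul (h2 1)).sub ((h 1).mul (h2 0))) using 1; rfl; simp; ring
  exact (PiLp.continuousLinearEquiv 2 ℝ (fun _ : Fin 3 => ℝ)).symm.hasFDerivAt.comp_hasDerivAt x key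

lemma const_on_of_deriv_zero {E : Type*} [NormedAddCommGroup E] [NormedSpace ℝ E]
    {f : ℝ → E} {I : Set ℝ} (hI : I.OrdConnected)
    (hd : ∀ s ∈ I, HasDerivAt f 0 s) :
    ∀ x ∈ I, ∀ y ∈ I, f x = f y := by
  have key : ∀ x ∈ I, ∀ y ∈ I, x ≤ y → f y = f x := by
    intro x hx y hy hxy
    rcases eq_or_lt_of_le hxy with rfl | hlt
    · rfl
    have hsub : Set.Icc x y ⊆ I := hI.out hx hy
    refine constant_of_derivWithin_zero (fun z hz => ?_) (fun z hz => ?_) y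
      (Set.right_mem_Icc.2 hxy)
    · exact (hd z (hsub hz)).differentiableAt.differentiableWithinAt
    · exact ((hd z (hsub (Set.Ico_subset_Icc_self hz))).hasDerivWithinAt).derivWithin
        (uniqueDiffOn_Icc hlt z (Set.Ico_subset_Icc_self hz))
  intro x hx y hy
  rcases le_total x y with h | h
  · exact (key x hx y hy h).symm
  · exact key y hy x hx h

theorem stmt_13
    (ξ : ℝ → EuclideanSpace ℝ (Fin 3))
    (hξ : ContDiff ℝ (⊤ : ℕ∞) ξ)
    (hunit : ∀ t, ‖deriv ξ t‖ = 1)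
    (k τ r : ℝ → ℝ) (N B : ℝ → EuclideanSpace ℝ (Fin 3))
    (hk : ∀ t, k t = ‖deriv (deriv ξ) t‖)
    (hkpos : ∀ t, 0 < k t)
    (hN : ∀ t, N t = (k t)⁻¹ • deriv (deriv ξ) t)
    (hB : ∀ t, B t = cross3 (deriv ξ t) (N t))
    (hτ : ∀ t, τ t = det3 (deriv ξ t) (deriv (deriv ξ) t) (deriv (deriv (deriv ξ)) t) / (k t) ^ 2)
    (hτne : ∀ t, τ t ≠ 0)
    (hr : ∀ t, r t = (k t)⁻¹)
    (D : ℝ → EuclideanSpace ℝ (Fin 3))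
    (hD : ∀ t, D t = τ t • deriv ξ t + k t • B t)
    (I : Set ℝ) (hI : I.OrdConnected) :
    (∃ v, ∀ s ∈ I, ‖D s‖⁻¹ • D s = v) ↔ (∃ c, ∀ s ∈ I, τ s / k s = c) := by
  classical
  set T := deriv ξ with hT_def
  set A := deriv T with hA_def
  set J := deriv A with hJ_def
  have hξ' : ContDiff ℝ ((⊤ : ℕ∞) : WithTop ℕ∞) ξ := hξ.of_le (by simp)
  have h1 := contDiff_infty_iff_deriv.mp hξ'
  have h2 := contDiff_infty_iff_deriv.mp h1.2
  have h3 := contDiff_infty_iff_deriv.mp h2.2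
  have h4 := contDiff_infty_iff_deriv.mp h3.2
  have hTd : ∀ t, HasDerivAt T (A t) t := fun t => (h2.1 t).hasDerivAt
  have hAd : ∀ t, HasDerivAt A (J t) t := fun t => (h3.1 t).hasDerivAt
  have hkne : ∀ t, k t ≠ 0 := fun t => (hkpos t).ne'
  have hTT : ∀ t, ⟪T t, T t⟫ = 1 := fun t => by
    rw [real_inner_self_eq_norm_sq, hunit]; norm_num
  have hAA : ∀ t, ⟪A t, A t⟫ = k t ^ 2 := fun t => by
    rw [real_inner_self_eq_norm_sq, hk]
  have hAT : ∀ t, ⟪A t, T t⟫ = 0 := by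
    intro t
    have h := (hTd t).inner ℝ (hTd t)
    rw [show (fun t => ⟪T t, T t⟫) = fun _ => (1:ℝ) from funext hTT] at h
    have h0 := h.unique (hasDerivAt_const t 1)
    have hcomm : ⟪T t, A t⟫ = ⟪A t, T t⟫ := real_inner_comm _ _
    linarith
  have hTA : ∀ t, ⟪T t, A t⟫ = 0 := fun t => (real_inner_comm _ _).trans (hAT t)
  have hkd : ∀ t, HasDerivAt k (⟪J t, A t⟫ / k t) t := by
    intro t
    have hin : HasDerivAt (fun t => ⟪A t, A t⟫) (⟪A t, J t⟫ + ⟪J t, A t⟫) t :=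
      (hAd t).inner ℝ (hAd t)
    have h := hin.sqrt (by rw [hAA t]; exact pow_ne_zero 2 (hkne t))
    have hkeq : k = fun t => Real.sqrt ⟪A t, A t⟫ :=
      funext fun t => by rw [hk, norm_eq_sqrt_real_inner]
    rw [← hkeq] at h
    convert h using 1
    have hs : Real.sqrt ⟪A t, A t⟫ = k t := by
      rw [hAA, Real.sqrt_sq (hkpos t).le]
    rw [real_inner_comm (A t) (J t), hs]
    ring
  -- inner product identities
  have hXX : ∀ t, ⟪cross3 (T t) (A t), cross3 (T t) (A t)⟫ = k t ^ 2 := fun t => by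
    rw [lagrange, hTT, hAA, hTA]; ring
  have hXT : ∀ t, ⟪cross3 (T t) (A t), T t⟫ = 0 := fun t => by
    rw [inner_cross_eq_det, det3_eq_zero₁₃]
  have hTX : ∀ t, ⟪T t, cross3 (T t) (A t)⟫ = 0 := fun t =>
    (real_inner_comm _ _).trans (hXT t)
  have hXA : ∀ t, ⟪cross3 (T t) (A t), A t⟫ = 0 := fun t => by
    rw [inner_cross_eq_det, det3_eq_zero₂₃]
  have hAX : ∀ t, ⟪A t, cross3 (T t) (A t)⟫ = 0 := fun t =>
    (real_inner_comm _ _).trans (hXA t)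
  have hdet : ∀ t, det3 (T t) (A t) (J t) = τ t * k t ^ 2 := fun t => by
    rw [hτ]; exact (div_mul_cancel₀ _ (pow_ne_zero 2 (hkne t))).symm
  have hUX : ∀ t, ⟪cross3 (T t) (J t), cross3 (T t) (A t)⟫ = ⟪J t, A t⟫ := fun t => by
    rw [lagrange, hTT, hTA]; ring
  have hXU : ∀ t, ⟪cross3 (T t) (A t), cross3 (T t) (J t)⟫ = ⟪J t, A t⟫ := fun t =>
    (real_inner_comm _ _).trans (hUX t)
  have hUT : ∀ t, ⟪cross3 (T t) (J t), T t⟫ = 0 := fun t => by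
    rw [inner_cross_eq_det, det3_eq_zero₁₃]
  have hUA : ∀ t, ⟪cross3 (T t) (J t), A t⟫ = -(τ t * k t ^ 2) := fun t => by
    rw [inner_cross_eq_det, det3_swap23, hdet]
  -- differentiability of τ
  have hXd : ∀ t, HasDerivAt (fun t => cross3 (T t) (A t)) (cross3 (T t) (J t)) t := by
    intro t
    have := hasDerivAt_cross3 (hTd t) (hAd t)
    simpa [cross3_self] using this
  have hτdiff : Differentiable ℝ τ := by
    have hτeq : τ = fun t => ⟪cross3 (T t) (A t), J t⟫ / ⟪A t, A t⟫ := funext fun t => by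
      rw [hτ, inner_cross_eq_det, hAA]
    rw [hτeq]
    refine Differentiable.div ?_ ?_ (fun t => by rw [hAA]; exact pow_ne_zero 2 (hkne t))
    · exact fun t => ((hXd t).differentiableAt.inner ℝ (h4.1 t))
    · exact fun t => ((hAd t).differentiableAt.inner ℝ (hAd t).differentiableAt)
  have hτd : ∀ t, HasDerivAt τ (deriv τ t) t := fun t => (hτdiff t).hasDerivAt
  -- D
  have hDeq : ∀ t, D t = τ t • T t + cross3 (T t) (A t) := fun t => by
    rw [hD, hB, hN, cross3_smul_right, smul_smul, mul_inv_cancel₀ (hkne t), one_smul]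
  have hDd : ∀ t, HasDerivAt D
      (deriv τ t • T t + τ t • A t + cross3 (T t) (J t)) t := by
    intro t
    have h5 := ((hτd t).smul (hTd t)).add (hXd t)
    rw [show D = fun t => τ t • T t + cross3 (T t) (A t) from funext hDeq]
    refine h5.congr_deriv ?_
    abel
  have hDT : ∀ t, ⟪D t, T t⟫ = τ t := fun t => by
    rw [hDeq, inner_add_left, real_inner_smul_left, hTT, hXT]; ring
  have hDX : ∀ t, ⟪D t, cross3 (T t) (A t)⟫ = k t ^ 2 := fun t => by
    rw [hDeq, inner_add_left, real_inner_smul_left, hTX, hXX]; ring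
  have hDne : ∀ t, D t ≠ 0 := fun t h => hτne t (by rw [← hDT t, h, inner_zero_left])
  have hDvalT : ∀ t, ⟪deriv τ t • T t + τ t • A t + cross3 (T t) (J t), T t⟫ = deriv τ t := by
    intro t
    rw [inner_add_left, inner_add_left, real_inner_smul_left, real_inner_smul_left,
      hTT, hAT, hUT]
    ring
  have hDvalX : ∀ t, ⟪deriv τ t • T t + τ t • A t + cross3 (T t) (J t),
      cross3 (T t) (A t)⟫ = ⟪J t, A t⟫ := by
    intro t
    rw [inner_add_left, inner_add_left, real_inner_smul_left, real_inner_smul_left,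
      hTX, hAX, hUX]
    ring
  constructor
  · -- forward
    rintro ⟨v, hv⟩
    by_cases hne : I.Nonempty
    swap
    · exact ⟨0, fun s hs => absurd ⟨s, hs⟩ hne⟩
    obtain ⟨s₀, hs₀⟩ := hne
    by_cases hsing : ∀ x ∈ I, x = s₀
    · exact ⟨τ s₀ / k s₀, fun s hs => by rw [hsing s hs]⟩
    push_neg at hsing
    obtain ⟨b, hbI, hbne⟩ := hsing
    have hconv : Convex ℝ I := hI.convex
    have hint : (interior I).Nonempty := by
      have h1 : Set.Icc (min b s₀) (max b s₀) ⊆ I := by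
        refine hI.out ?_ ?_
        · rcases min_choice b s₀ with h | h <;> rw [h] <;> assumption
        · rcases max_choice b s₀ with h | h <;> rw [h] <;> assumption
      refine ⟨(min b s₀ + max b s₀) / 2, interior_mono h1 ?_⟩
      rw [interior_Icc]
      have : min b s₀ < max b s₀ := min_lt_max.mpr hbne
      rw [Set.mem_Ioo]
      constructor <;> linarith
    have hud : ∀ s ∈ I, UniqueDiffWithinAt ℝ I s := fun s hs =>
      uniqueDiffWithinAt_convex hconv hint (subset_closure hs)
    have hvs : ∀ s ∈ I, D s = ‖D s‖ • v := by
      intro s hs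
      rw [← hv s hs, smul_smul, mul_inv_cancel₀ (norm_ne_zero_iff.2 (hDne s)), one_smul]
    have hvnorm : ‖v‖ = 1 := by
      rw [← hv s₀ hs₀, norm_smul, norm_inv, norm_norm,
        inv_mul_cancel₀ (norm_ne_zero_iff.2 (hDne s₀))]
    have hDinner : ∀ s ∈ I, ⟪D s, v⟫ = ‖D s‖ := by
      intro s hs
      conv_lhs => rw [hvs s hs]
      rw [real_inner_smul_left, real_inner_self_eq_norm_sq, hvnorm]
      norm_num
    set E := fun t => D t - ⟪D t, v⟫ • v with hE_def
    have hE0 : ∀ y ∈ I, E y = 0 := fun y hy => by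
      show D y - ⟪D y, v⟫ • v = 0
      rw [hDinner y hy, ← hvs y hy, sub_self]
    have hEd : ∀ s, HasDerivAt E
        ((deriv τ s • T s + τ s • A s + cross3 (T s) (J s)) -
          ⟪deriv τ s • T s + τ s • A s + cross3 (T s) (J s), v⟫ • v) s := by
      intro s
      have h6 : HasDerivAt (fun t => ⟪D t, v⟫)
          (⟪deriv τ s • T s + τ s • A s + cross3 (T s) (J s), v⟫) s := by
        have := (hDd s).inner ℝ (hasDerivAt_const s v)
        simpa using this
      exact (hDd s).sub (h6.smul_const v)
    have hkey : ∀ s ∈ I, deriv τ s • T s + τ s • A s + cross3 (T s) (J s) =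
        ⟪deriv τ s • T s + τ s • A s + cross3 (T s) (J s), v⟫ • v := by
      intro s hs
      have hw1 : HasDerivWithinAt E 0 I s :=
        (hasDerivWithinAt_const s I (0 : EuclideanSpace ℝ (Fin 3))).congr
          (fun y hy => hE0 y hy) (hE0 s hs)
      have hw2 := (hEd s).hasDerivWithinAt (s := I)
      have := (hw2.derivWithin (hud s hs)).symm.trans (hw1.derivWithin (hud s hs))
      exact sub_eq_zero.mp this
    have hg0 : ∀ s ∈ I, HasDerivAt (fun t => τ t / k t) 0 s := by
      intro s hs
      set lam := ⟪deriv τ s • T s + τ s • A s + cross3 (T s) (J s), v⟫ * ‖D s‖⁻¹ with hlam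
      have hD'2 : deriv τ s • T s + τ s • A s + cross3 (T s) (J s) = lam • D s := by
        rw [hlam, mul_smul, hv s hs]
        exact hkey s hs
      have e1 : deriv τ s = lam * τ s := by
        have h9 := congrArg (fun w => (⟪w, T s⟫ : ℝ)) hD'2
        simp only [real_inner_smul_left, hDvalT s, hDT s] at h9
        exact h9
      have e2 : ⟪J s, A s⟫ = lam * k s ^ 2 := by
        have h9 := congrArg (fun w => (⟪w, cross3 (T s) (A s)⟫ : ℝ)) hD'2
        simp only [real_inner_smul_left, hDvalX s, hDX s] at h9
        exact h9
      have hgd : HasDerivAt (fun t => τ t / k t)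
          ((deriv τ s * k s - τ s * (⟪J s, A s⟫ / k s)) / k s ^ 2) s :=
        (hτd s).div (hkd s) (hkne s)
      convert hgd using 1
      rw [e1, e2]
      field_simp [hkne s]
      ring
    exact ⟨τ s₀ / k s₀, fun s hs => const_on_of_deriv_zero hI hg0 s hs s₀ hs₀⟩
  · -- backward
    rintro ⟨c, hc⟩
    by_cases hne : I.Nonempty
    swap
    · exact ⟨0, fun s hs => absurd ⟨s, hs⟩ hne⟩
    obtain ⟨s₀, hs₀⟩ := hne
    refine ⟨‖D s₀‖⁻¹ • D s₀, fun s hs => ?_⟩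
    set F := fun t => c • T t + (k t)⁻¹ • cross3 (T t) (A t) with hF_def
    have hτc : ∀ u ∈ I, τ u = c * k u := by
      intro u hu
      have h := hc u hu
      rw [div_eq_iff (hkne u)] at h
      exact h
    have hu_dec : ∀ u, cross3 (T u) (J u) =
        (⟪J u, A u⟫ / k u ^ 2) • cross3 (T u) (A u) - τ u • A u := by
      intro u
      have hspan := span3 (cross3 (T u) (J u)) (T u) (A u)
      rw [hXX u, hXU u, hUT u, hUA u, hTA u, hAA u, hTT u] at hspan
      simp only [zero_smul, one_smul, smul_sub, sub_zero, neg_smul, smul_zero, zero_sub] at hspan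
      have hk2 : (k u ^ 2 : ℝ) ≠ 0 := pow_ne_zero 2 (hkne u)
      have : cross3 (T u) (J u) = (k u ^ 2)⁻¹ • (k u ^ 2 • cross3 (T u) (J u)) := by
        rw [smul_smul, inv_mul_cancel₀ hk2, one_smul]
      rw [this, hspan]
      match_scalars <;> field_simp [hkne u]
    have hFd : ∀ u ∈ I, HasDerivAt F 0 u := by
      intro u hu
      have h5 : HasDerivAt (fun t => c • T t) (c • A u) u := (hTd u).const_smul c
      have h6 : HasDerivAt (fun t => (k t)⁻¹) (-(⟪J u, A u⟫ / k u) / k u ^ 2) u :=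
        (hkd u).inv (hkne u)
      have h7 := h6.smul (hXd u)
      have h8 := h5.add h7
      rw [hF_def]
      refine h8.congr_deriv ?_
      rw [hu_dec u, hτc u hu]
      match_scalars <;> · field_simp [hkne u]; try ring
    have hFconst := const_on_of_deriv_zero hI hFd
    have hDkF : ∀ u ∈ I, D u = k u • F u := by
      intro u hu
      rw [hDeq u, hF_def]
      simp only [smul_add, smul_smul, mul_inv_cancel₀ (hkne u), one_smul, hτc u hu,
        mul_comm (k u) c]
    have hFne : ∀ u, F u ≠ 0 := by
      intro u h
      have hin : ⟪F u, cross3 (T u) (A u)⟫ = k u := by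
        rw [hF_def]
        simp only [inner_add_left, real_inner_smul_left, hTX u, hXX u]
        field_simp [hkne u]
        try ring
      rw [h, inner_zero_left] at hin
      exact hkne u hin.symm
    have hunitF : ∀ u ∈ I, ‖D u‖⁻¹ • D u = ‖F u‖⁻¹ • F u := by
      intro u hu
      have hFn : ‖F u‖ ≠ 0 := norm_ne_zero_iff.2 (hFne u)
      rw [hDkF u hu, norm_smul, Real.norm_eq_abs, abs_of_pos (hkpos u), smul_smul]
      congr 1
      field_simp [hkne u, hFn]
    rw [hunitF s hs, hunitF s₀ hs₀, hFconst s hs s₀ hs₀]
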